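/- For r, s ≥ 0 with r + s > 0, the subspace S = {[[a, ar+bs],[0,b]] : a,b ∈ ℂ} of M₂(ℂ) is not 1-hyperreflexive: there exists a unitary U = [[α, −β],[β, α]] with α = sin θ > 0, β = cos θ, 0 < α < (r+s)β, such that dist(U, S) = 1 while β_S(U) < 1. -/

import Mathlib

noncomputable def act {n : ℕ} (M : Matrix (Fin n) (Fin n) ℂ) :
    EuclideanSpace ℂ (Fin n) →L[ℂ] EuclideanSpace ℂ (Fin n) :=
  LinearMap.toContinuousLinearMap (Matrix.toEuclideanLin M)

noncomputable def mOpDist {n : ℕ} (T : Matrix (Fin n) (Fin n) ℂ)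
    (S : Submodule ℂ (Matrix (Fin n) (Fin n) ℂ)) : ℝ :=
  Metric.infDist (act T) ((fun A => act A) '' (S : Set (Matrix (Fin n) (Fin n) ℂ)))

noncomputable def mBeta {n : ℕ} (S : Submodule ℂ (Matrix (Fin n) (Fin n) ℂ))
    (T : Matrix (Fin n) (Fin n) ℂ) : ℝ :=
  ⨆ x : {x : EuclideanSpace ℂ (Fin n) // ‖x‖ = 1},
    Metric.infDist (act T x.1) ((fun A => act A x.1) '' (S : Set (Matrix (Fin n) (Fin n) ℂ)))

def MOneHyperreflexive {n : ℕ} (S : Submodule ℂ (Matrix (Fin n) (Fin n) ℂ)) : Prop :=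
  ∀ T : Matrix (Fin n) (Fin n) ℂ, mOpDist T S = mBeta S T

/-- The subspace `{[[a, ar+bs],[0,b]] : a, b ∈ ℂ}` for real parameters `r, s`. -/
noncomputable def Srs (r s : ℝ) : Submodule ℂ (Matrix (Fin 2) (Fin 2) ℂ) where
  carrier := {M | M 1 0 = 0 ∧ M 0 1 = (r : ℂ) * M 0 0 + (s : ℂ) * M 1 1}
  add_mem' := by
    rintro M N ⟨h1, h2⟩ ⟨h3, h4⟩
    refine ⟨by simp [h1, h3], ?_⟩
    simp only [Matrix.add_apply, h2, h4]; ring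
  zero_mem' := by simp
  smul_mem' := by
    rintro c M ⟨h1, h2⟩
    refine ⟨by simp [h1], ?_⟩
    simp only [Matrix.smul_apply, h2, smul_eq_mul]; ring

/- ## Auxiliary machinery -/

noncomputable def v2 (z w : ℂ) : EuclideanSpace ℂ (Fin 2) := WithLp.toLp 2 ![z, w]

@[simp] lemma v2_0 (z w : ℂ) : v2 z w 0 = z := rfl
@[simp] lemma v2_1 (z w : ℂ) : v2 z w 1 = w := rfl

lemma act_apply (M : Matrix (Fin 2) (Fin 2) ℂ) (x : EuclideanSpace ℂ (Fin 2)) (i : Fin 2) :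
    act M x i = M i 0 * x 0 + M i 1 * x 1 := by
  simp [act, Matrix.toEuclideanLin_apply, Matrix.mulVec, dotProduct, Fin.sum_univ_two]
  fin_cases i <;> rfl

lemma act_eq_v2 (M : Matrix (Fin 2) (Fin 2) ℂ) (x : EuclideanSpace ℂ (Fin 2)) :
    act M x = v2 (M 0 0 * x 0 + M 0 1 * x 1) (M 1 0 * x 0 + M 1 1 * x 1) := by
  ext i; fin_cases i <;> simp [act_apply, v2]

lemma act_sub (M N : Matrix (Fin 2) (Fin 2) ℂ) : act (M - N) = act M - act N := by
  ext x i
  simp [act_apply, Matrix.sub_apply]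
  ring

lemma act_zero : act (0 : Matrix (Fin 2) (Fin 2) ℂ) = 0 := by
  ext x i
  simp [act_apply]

lemma v2_sub (a b c d : ℂ) : v2 a b - v2 c d = v2 (a - c) (b - d) := by
  ext i; fin_cases i <;> rfl

lemma norm_sq_eucl (x : EuclideanSpace ℂ (Fin 2)) : ‖x‖ ^ 2 = ‖x 0‖ ^ 2 + ‖x 1‖ ^ 2 := by
  rw [EuclideanSpace.norm_eq, Real.sq_sqrt (by positivity)]
  simp [Fin.sum_univ_two]

lemma normc_sq (z : ℂ) : ‖z‖ ^ 2 = z.re ^ 2 + z.im ^ 2 := by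
  rw [Complex.sq_norm, Complex.normSq_apply]; ring

lemma normc_real_sq (z : ℝ) : ‖((z : ℝ) : ℂ)‖ ^ 2 = z ^ 2 := by
  rw [Complex.norm_real]; exact sq_abs z

lemma inner_v2 (z w z' w' : ℂ) :
    (inner ℂ (v2 z w) (v2 z' w') : ℂ) = starRingEnd ℂ z * z' + starRingEnd ℂ w * w' := by
  simp [PiLp.inner_apply, Fin.sum_univ_two, v2]
  ring

lemma norm_le_of_sq_le {a b : ℝ} (hb : 0 ≤ b) (ha : 0 ≤ a) (h : a ^ 2 ≤ b ^ 2) : a ≤ b := by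
  nlinarith

lemma eq_of_sq_eq {a b : ℝ} (ha : 0 ≤ a) (hb : 0 ≤ b) (h : a ^ 2 = b ^ 2) : a = b := by
  have := congrArg Real.sqrt h
  rwa [Real.sqrt_sq ha, Real.sqrt_sq hb] at this

lemma mem_Srs {r s : ℝ} {A : Matrix (Fin 2) (Fin 2) ℂ} :
    A ∈ Srs r s ↔ A 1 0 = 0 ∧ A 0 1 = (r : ℂ) * A 0 0 + (s : ℂ) * A 1 1 :=
  Iff.rfl

lemma U_isometry (α β : ℝ) (hpy : α ^ 2 + β ^ 2 = 1) (x : EuclideanSpace ℂ (Fin 2)) :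
    ‖act !![(α:ℂ), -(β:ℂ); (β:ℂ), (α:ℂ)] x‖ = ‖x‖ := by
  have h2 : ‖act !![(α:ℂ), -(β:ℂ); (β:ℂ), (α:ℂ)] x‖ ^ 2 = ‖x‖ ^ 2 := by
    rw [norm_sq_eucl, norm_sq_eucl x, act_apply, act_apply]
    simp only [Matrix.of_apply, Matrix.cons_val', Matrix.cons_val_zero, Matrix.cons_val_one,
      Matrix.head_cons, Matrix.empty_val', Matrix.cons_val_fin_one, Matrix.head_fin_const,
      normc_sq, Complex.add_re, Complex.add_im, Complex.mul_re, Complex.mul_im,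
      Complex.ofReal_re, Complex.ofReal_im, Complex.neg_re, Complex.neg_im]
    nlinarith [hpy]
  exact eq_of_sq_eq (norm_nonneg _) (norm_nonneg _) h2

lemma norm_act_U (α β : ℝ) (hpy : α ^ 2 + β ^ 2 = 1) :
    ‖act !![(α:ℂ), -(β:ℂ); (β:ℂ), (α:ℂ)]‖ = 1 := by
  apply le_antisymm
  · exact ContinuousLinearMap.opNorm_le_bound _ zero_le_one
      (fun x => by rw [U_isometry α β hpy x, one_mul])
  · have h1 : ‖v2 1 0‖ = 1 := by
      have h : ‖v2 1 0‖ ^ 2 = 1 := by rw [norm_sq_eucl]; simp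
      nlinarith [norm_nonneg (v2 1 0)]
    have := ContinuousLinearMap.le_opNorm (act !![(α:ℂ), -(β:ℂ); (β:ℂ), (α:ℂ)]) (v2 1 0)
    rw [U_isometry α β hpy, h1, mul_one] at this
    exact this

set_option maxHeartbeats 400000 in
/-- For `r, s ≥ 0` with `r + s > 0` the subspace `S = Srs r s` is not
`1`-hyperreflexive: there is a rotation unitary `U = [[α,−β],[β,α]]`,
`α = sin θ > 0`, `β = cos θ`, `0 < α < (r+s)β`, with `dist(U,S) = 1` but
`β_S(U) < 1`. -/
theorem Srs_not_oneHyperreflexive (r s : ℝ) (hr : 0 ≤ r) (hs : 0 ≤ s)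
    (hrs : 0 < r + s) :
    ¬ MOneHyperreflexive (Srs r s) ∧
    ∃ θ : ℝ, 0 < Real.sin θ ∧ Real.sin θ < (r + s) * Real.cos θ ∧
      mOpDist !![(Real.sin θ : ℂ), -(Real.cos θ : ℂ);
                 (Real.cos θ : ℂ), (Real.sin θ : ℂ)] (Srs r s) = 1 ∧
      mBeta (Srs r s) !![(Real.sin θ : ℂ), -(Real.cos θ : ℂ);
                 (Real.cos θ : ℂ), (Real.sin θ : ℂ)] < 1 := by
  classical
  -- choice of the parameter u = tan θ
  obtain ⟨u, hu, hurs, hN⟩ : ∃ u : ℝ, 0 < u ∧ u < r + s ∧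
      u * (r - u) ^ 2 ≤ (r + s - u + s * u ^ 2) * (1 + r * u) := by
    refine ⟨min 1 (r + s) / (10 * (1 + r + s) ^ 2), ?_, ?_, ?_⟩
    · have hmin : 0 < min 1 (r + s) := lt_min one_pos hrs
      positivity
    · have hmin : min 1 (r + s) ≤ r + s := min_le_right _ _
      have h2 : (0:ℝ) < 10 * (1 + r + s) ^ 2 := by positivity
      rw [div_lt_iff₀ h2]
      have h3 : (1:ℝ) < 10 * (1 + r + s) ^ 2 := by nlinarith [sq_nonneg (r + s)]
      calc min 1 (r + s) ≤ r + s := min_le_right _ _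
        _ = (r + s) * 1 := (mul_one _).symm
        _ < (r + s) * (10 * (1 + r + s) ^ 2) := (mul_lt_mul_iff_right₀ hrs).mpr h3
    · set u : ℝ := min 1 (r + s) / (10 * (1 + r + s) ^ 2) with hu_def
      have hmin : 0 < min 1 (r + s) := lt_min one_pos hrs
      have hden10 : (0:ℝ) < 10 * (1 + r + s) ^ 2 := by positivity
      have hu : 0 < u := div_pos hmin hden10
      have h1 : u * (10 * (1 + r + s) ^ 2) = min 1 (r + s) := by
        rw [hu_def]; field_simp
      have h2 : min 1 (r + s) ≤ r + s := min_le_right _ _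
      have h2' : min 1 (r + s) ≤ 1 := min_le_left _ _
      have hsq1 : (1:ℝ) ≤ (1 + r + s) ^ 2 := by nlinarith
      have hule : u ≤ (r + s) / 10 := by
        rw [hu_def, div_le_div_iff₀ hden10 (by norm_num)]
        nlinarith [hmin]
      have h3a : r - u ≤ 1 + r + s := by linarith only [hu, hs, hrs]
      have h3b : -(1 + r + s) ≤ r - u := by linarith only [hule, hr, hrs]
      have h3 : (r - u) ^ 2 ≤ (1 + r + s) ^ 2 := sq_le_sq' h3b h3a
      have h4 : u * (r - u) ^ 2 ≤ u * (1 + r + s) ^ 2 :=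
        mul_le_mul_of_nonneg_left h3 hu.le
      have h5 : u * (1 + r + s) ^ 2 ≤ (r + s) / 10 := by linarith only [h1, h2]
      have hX : (0:ℝ) ≤ r + s - u := by linarith only [hule, hrs]
      have hA : r + s - u ≤ (r + s - u + s * u ^ 2) * (1 + r * u) := by
        nlinarith only [mul_nonneg hs (sq_nonneg u),
          mul_nonneg (mul_nonneg hr hu.le) hX,
          mul_nonneg (mul_nonneg (mul_nonneg hr hs) hu.le) (sq_nonneg u)]
      linarith only [h4, h5, hA, hule, hrs]
  have hden : (0:ℝ) < 1 + r * u := by linarith only [mul_nonneg hr hu.le]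
  obtain ⟨q, t, hq', ht', htq⟩ : ∃ q t : ℝ, q * (1 + r * u) = r - u ∧
      t * (u * (1 + r * u)) = r + s - u + s * u ^ 2 ∧ q ^ 2 ≤ t := by
    refine ⟨(r - u) / (1 + r * u), (r + s - u + s * u ^ 2) / (u * (1 + r * u)),
      by field_simp, by field_simp, ?_⟩
    have hD : (0:ℝ) < u * (1 + r * u) ^ 2 := by positivity
    have h1 : ((r - u) / (1 + r * u)) ^ 2 * (u * (1 + r * u) ^ 2) = u * (r - u) ^ 2 := by
      field_simp
    have h2 : ((r + s - u + s * u ^ 2) / (u * (1 + r * u))) * (u * (1 + r * u) ^ 2)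
        = (r + s - u + s * u ^ 2) * (1 + r * u) := by
      field_simp
    have h := hN
    rw [← h1, ← h2] at h
    exact le_of_mul_le_mul_right h hD
  -- trigonometry
  set θ : ℝ := Real.arctan u with hθ_def
  set α : ℝ := Real.sin θ with hα_def
  set β : ℝ := Real.cos θ with hβ_def
  have hβ : 0 < β := Real.cos_arctan_pos u
  have hαβ : α = u * β := by
    have h : Real.tan θ = u := Real.tan_arctan u
    rw [Real.tan_eq_sin_div_cos, div_eq_iff (ne_of_gt hβ)] at h
    rw [hα_def]; exact h
  have hpy : α ^ 2 + β ^ 2 = 1 := Real.sin_sq_add_cos_sq θ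
  have hα : 0 < α := by rw [hαβ]; positivity
  have hαlt : α < (r + s) * β := by
    rw [hαβ]; exact mul_lt_mul_of_pos_right hurs hβ
  have hβ1 : β < 1 := by nlinarith only [hpy, hα, hβ, mul_pos hα hα]
  -- the vectors for the distance lower bound
  set g : ℝ := Real.sqrt (t - q ^ 2) with hg_def
  have hg2 : g ^ 2 = t - q ^ 2 := Real.sq_sqrt (by linarith only [htq])
  set U : Matrix (Fin 2) (Fin 2) ℂ := !![(α:ℂ), -(β:ℂ); (β:ℂ), (α:ℂ)] with hU_def
  -- scalar identities
  have J1 : α + β * q + r * (α * q - β) = 0 := by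
    linear_combination (1 + r * q) * hαβ + β * hq'
  have hQ : (u * t + u * s * q - s - q) * (1 + r * u) = 0 := by
    linear_combination ht' + (u * s - 1) * hq'
  have hQ0 : u * t + u * s * q - s - q = 0 := by
    rcases mul_eq_zero.mp hQ with h | h
    · exact h
    · linarith
  have J2 : s * (α * q - β) + q * (α * q - β) + α * (t - q ^ 2) = 0 := by
    linear_combination ((s + q) * q + t - q ^ 2) * hαβ + β * hQ0
  have J2g : s * (α * q - β) + q * (α * q - β) + α * g ^ 2 = 0 := by rw [hg2]; exact J2
  have J1C : (α : ℂ) + (β : ℂ) * (q : ℂ) + (r : ℂ) * ((α : ℂ) * (q : ℂ) - (β : ℂ)) = 0 := by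
    exact_mod_cast congrArg (fun y : ℝ => (y : ℂ)) J1
  have J2C : (s : ℂ) * ((α:ℂ) * q - β) + (q:ℂ) * ((α:ℂ) * q - β) + (α:ℂ) * (g:ℂ) ^ 2 = 0 := by
    exact_mod_cast congrArg (fun y : ℝ => (y : ℂ)) J2g
  have hpyC : (α : ℂ) ^ 2 + (β : ℂ) ^ 2 = 1 := by
    exact_mod_cast congrArg (fun y : ℝ => (y : ℂ)) hpy
  -- the lower bound for the operator distance
  have hlow : ∀ A : Matrix (Fin 2) (Fin 2) ℂ, A ∈ Srs r s → (1:ℝ) ≤ ‖act (U - A)‖ := by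
    intro A hA
    obtain ⟨h10, h01⟩ := mem_Srs.mp hA
    set a : ℂ := A 0 0 with ha_def
    set b : ℂ := A 1 1 with hb_def
    set c1 : EuclideanSpace ℂ (Fin 2) := v2 1 ((q:ℝ):ℂ) with hc1_def
    set c2 : EuclideanSpace ℂ (Fin 2) := v2 0 ((g:ℝ):ℂ) with hc2_def
    set x1 : EuclideanSpace ℂ (Fin 2) := v2 (((α + β*q : ℝ)):ℂ) (((α*q - β : ℝ)):ℂ) with hx1_def
    set x2 : EuclideanSpace ℂ (Fin 2) := v2 (((β*g : ℝ)):ℂ) (((α*g : ℝ)):ℂ) with hx2_def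
    have hΦ : (inner ℂ c1 (act (U - A) x1) : ℂ) + inner ℂ c2 (act (U - A) x2)
        = ((1 + q ^ 2 + g ^ 2 : ℝ) : ℂ) := by
      rw [act_eq_v2, act_eq_v2, hc1_def, hc2_def, hx1_def, hx2_def, inner_v2, inner_v2]
      simp only [v2_0, v2_1, Matrix.sub_apply, hU_def, Matrix.of_apply, Matrix.cons_val',
        Matrix.cons_val_zero, Matrix.cons_val_one, Matrix.head_cons, Matrix.empty_val',
        Matrix.cons_val_fin_one, Matrix.head_fin_const, h10, h01, ← ha_def, ← hb_def,
        map_one, map_zero, Complex.conj_ofReal]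
      push_cast
      linear_combination (-a) * J1C + (-b) * J2C + ((1:ℂ) + (q:ℂ)^2 + (g:ℂ)^2) * hpyC
    -- norms of the four vectors
    have hc1n : ‖c1‖ ^ 2 = 1 + q ^ 2 := by
      rw [hc1_def, norm_sq_eucl]; simp only [v2_0, v2_1, norm_one, normc_real_sq]; ring
    have hc2n : ‖c2‖ ^ 2 = g ^ 2 := by
      rw [hc2_def, norm_sq_eucl]; simp only [v2_0, v2_1, norm_zero, normc_real_sq]; ring
    have hx1n : ‖x1‖ ^ 2 = 1 + q ^ 2 := by
      rw [hx1_def, norm_sq_eucl]; simp only [v2_0, v2_1, normc_real_sq]; linear_combination (1 + q ^ 2) * hpy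
    have hx2n : ‖x2‖ ^ 2 = g ^ 2 := by
      rw [hx2_def, norm_sq_eucl]; simp only [v2_0, v2_1, normc_real_sq]; linear_combination g ^ 2 * hpy
    have hcx1 : ‖c1‖ * ‖x1‖ = 1 + q ^ 2 := by
      apply eq_of_sq_eq (by positivity) (by positivity)
      rw [mul_pow, hc1n, hx1n]; ring
    have hcx2 : ‖c2‖ * ‖x2‖ = g ^ 2 := by
      apply eq_of_sq_eq (by positivity) (by positivity)
      rw [mul_pow, hc2n, hx2n]; ring
    set N : ℝ := ‖act (U - A)‖ with hN_def
    have hNn : 0 ≤ N := norm_nonneg _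
    have hb1 : ‖(inner ℂ c1 (act (U - A) x1) : ℂ)‖ ≤ N * (1 + q ^ 2) := by
      calc ‖(inner ℂ c1 (act (U - A) x1) : ℂ)‖ ≤ ‖c1‖ * ‖act (U - A) x1‖ :=
            norm_inner_le_norm _ _
        _ ≤ ‖c1‖ * (N * ‖x1‖) := by
            apply mul_le_mul_of_nonneg_left (ContinuousLinearMap.le_opNorm _ _) (norm_nonneg _)
        _ = N * (‖c1‖ * ‖x1‖) := by ring
        _ = N * (1 + q ^ 2) := by rw [hcx1]
    have hb2 : ‖(inner ℂ c2 (act (U - A) x2) : ℂ)‖ ≤ N * g ^ 2 := by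
      calc ‖(inner ℂ c2 (act (U - A) x2) : ℂ)‖ ≤ ‖c2‖ * ‖act (U - A) x2‖ :=
            norm_inner_le_norm _ _
        _ ≤ ‖c2‖ * (N * ‖x2‖) := by
            apply mul_le_mul_of_nonneg_left (ContinuousLinearMap.le_opNorm _ _) (norm_nonneg _)
        _ = N * (‖c2‖ * ‖x2‖) := by ring
        _ = N * g ^ 2 := by rw [hcx2]
    have hsum : (1 + q ^ 2 + g ^ 2 : ℝ) ≤ N * (1 + q ^ 2 + g ^ 2) := by
      have h1 : ‖((1 + q ^ 2 + g ^ 2 : ℝ) : ℂ)‖ = 1 + q ^ 2 + g ^ 2 := by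
        rw [Complex.norm_real, Real.norm_eq_abs, abs_of_nonneg (by positivity)]
      calc (1 + q ^ 2 + g ^ 2 : ℝ) = ‖((1 + q ^ 2 + g ^ 2 : ℝ) : ℂ)‖ := h1.symm
        _ = ‖(inner ℂ c1 (act (U - A) x1) : ℂ) + inner ℂ c2 (act (U - A) x2)‖ := by rw [hΦ]
        _ ≤ ‖(inner ℂ c1 (act (U - A) x1) : ℂ)‖ + ‖(inner ℂ c2 (act (U - A) x2) : ℂ)‖ :=
            norm_add_le _ _
        _ ≤ N * (1 + q ^ 2) + N * g ^ 2 := add_le_add hb1 hb2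
        _ = N * (1 + q ^ 2 + g ^ 2) := by ring
    have hX1 : (1:ℝ) ≤ 1 + q ^ 2 + g ^ 2 := by
      linarith only [sq_nonneg q, sq_nonneg g]
    by_contra hcon
    push_neg at hcon
    have hlt : N * (1 + q ^ 2 + g ^ 2) < 1 * (1 + q ^ 2 + g ^ 2) :=
      mul_lt_mul_of_pos_right hcon (by linarith only [hX1])
    linarith only [hlt, hsum]
  -- the image set and its basic members
  have h0mem : act (0 : Matrix (Fin 2) (Fin 2) ℂ) ∈
      (fun A => act A) '' ((Srs r s : Set (Matrix (Fin 2) (Fin 2) ℂ))) :=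
    Set.mem_image_of_mem _ (by exact_mod_cast Submodule.zero_mem (Srs r s))
  have hUnorm : ‖act U‖ = 1 := norm_act_U α β hpy
  -- distance equals one
  have hdist : mOpDist U (Srs r s) = 1 := by
    apply le_antisymm
    · calc mOpDist U (Srs r s) ≤ dist (act U) (act 0) :=
          Metric.infDist_le_dist_of_mem h0mem
        _ = ‖act U‖ := by rw [dist_eq_norm, act_zero, sub_zero]
        _ = 1 := hUnorm
    · apply le_of_not_gt
      intro hcon
      obtain ⟨y, hy, hylt⟩ := (Metric.infDist_lt_iff ⟨_, h0mem⟩).mp hcon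
      obtain ⟨A, hAmem, rfl⟩ := hy
      have h1 : (1:ℝ) ≤ dist (act U) (act A) := by
        rw [dist_eq_norm, ← act_sub]
        exact hlow A hAmem
      linarith only [h1, hylt]
  -- the beta bound
  set m : ℝ := α * (1 - r * s) - β * (r + s) with hm_def
  have hm : m < 0 := by
    have h1 : α * (1 - r * s) ≤ α := by
      linarith only [mul_nonneg (mul_nonneg hr hs) hα.le]
    rw [hm_def]
    linarith only [h1, hαlt]
  set K : ℝ := m ^ 2 / ((1 + r ^ 2) * (1 + s ^ 2)) with hK_def
  have hKpos : 0 < K := by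
    rw [hK_def]
    exact div_pos (by rw [sq]; exact mul_pos_of_neg_of_neg hm hm) (by positivity)
  have hKle : K ≤ 1 := by
    rw [hK_def, div_le_one (by positivity)]
    have h : m ^ 2 + (α * (r + s) + β * (1 - r * s)) ^ 2 = (1 + r ^ 2) * (1 + s ^ 2) := by
      rw [hm_def]; linear_combination ((1 - r * s) ^ 2 + (r + s) ^ 2) * hpy
    linarith only [h, sq_nonneg (α * (r + s) + β * (1 - r * s))]
  set ρ : ℝ := max β (Real.sqrt (1 - K)) with hρ_def
  have hρ0 : 0 ≤ ρ := le_trans hβ.le (le_max_left _ _)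
  have hρ1 : ρ < 1 := by
    apply max_lt hβ1
    calc Real.sqrt (1 - K) < Real.sqrt 1 := Real.sqrt_lt_sqrt (by linarith) (by linarith)
      _ = 1 := Real.sqrt_one
  have hρβ : β ^ 2 ≤ ρ ^ 2 := by
    have h := le_max_left β (Real.sqrt (1 - K))
    nlinarith only [h, hβ.le, hρ0]
  have hρK : 1 - K ≤ ρ ^ 2 := by
    have h1 : Real.sqrt (1 - K) ≤ ρ := le_max_right _ _
    have h2 : Real.sqrt (1 - K) ^ 2 = 1 - K := Real.sq_sqrt (by linarith only [hKle])
    nlinarith only [h1, h2, Real.sqrt_nonneg (1 - K), hρ0]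
  have hbeta : mBeta (Srs r s) U < 1 := by
    have hsup : mBeta (Srs r s) U ≤ ρ := by
      apply Real.iSup_le _ hρ0
      rintro ⟨x, hx⟩
      simp only
      by_cases h1 : x 1 = 0
      · -- case x₁ = 0
        set A : Matrix (Fin 2) (Fin 2) ℂ := !![((α:ℝ):ℂ), ((r*α : ℝ):ℂ); 0, 0] with hA_def
        have hAmem : A ∈ Srs r s := by
          rw [mem_Srs, hA_def]
          refine ⟨by simp, ?_⟩
          simp only [Matrix.of_apply, Matrix.cons_val', Matrix.cons_val_zero, Matrix.cons_val_one,
            Matrix.head_cons, Matrix.empty_val', Matrix.cons_val_fin_one, Matrix.head_fin_const]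
          push_cast
          ring
        refine le_trans (Metric.infDist_le_dist_of_mem
          (Set.mem_image_of_mem _ (by exact_mod_cast hAmem))) ?_
        rw [dist_eq_norm]
        have hx0 : ‖x 0‖ ^ 2 = 1 := by
          have h := norm_sq_eucl x
          rw [hx, h1, norm_zero] at h
          linear_combination -h
        have hval : act U x - act A x = v2 0 ((β:ℂ) * x 0) := by
          rw [act_eq_v2, act_eq_v2, v2_sub]
          simp only [hU_def, hA_def, Matrix.of_apply, Matrix.cons_val', Matrix.cons_val_zero,
            Matrix.cons_val_one, Matrix.head_cons, Matrix.empty_val', Matrix.cons_val_fin_one,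
            Matrix.head_fin_const, h1]
          norm_num
        rw [hval]
        apply norm_le_of_sq_le hρ0 (norm_nonneg _)
        rw [norm_sq_eucl]
        simp only [v2_0, v2_1, norm_zero, norm_mul, Complex.norm_real]
        rw [Real.norm_eq_abs, abs_of_nonneg hβ.le]
        calc 0 ^ 2 + (β * ‖x 0‖) ^ 2 = β ^ 2 * ‖x 0‖ ^ 2 := by ring
          _ = β ^ 2 := by rw [hx0, mul_one]
          _ ≤ ρ ^ 2 := hρβ
      · by_cases h2 : x 0 + (r:ℂ) * x 1 = 0
        · -- case x₀ = -r x₁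
          obtain ⟨b0, hb0_def⟩ : ∃ b0 : ℝ, b0 = m / (1 + s ^ 2) := ⟨_, rfl⟩
          set A : Matrix (Fin 2) (Fin 2) ℂ := !![0, ((s*b0 : ℝ):ℂ); 0, ((b0 : ℝ):ℂ)] with hA_def
          have hAmem : A ∈ Srs r s := by
            rw [mem_Srs, hA_def]
            refine ⟨by simp, ?_⟩
            simp only [Matrix.of_apply, Matrix.cons_val', Matrix.cons_val_zero,
              Matrix.cons_val_one, Matrix.head_cons, Matrix.empty_val', Matrix.cons_val_fin_one,
              Matrix.head_fin_const]
            push_cast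
            ring
          refine le_trans (Metric.infDist_le_dist_of_mem
            (Set.mem_image_of_mem _ (by exact_mod_cast hAmem))) ?_
          rw [dist_eq_norm]
          have hx0 : x 0 = -(r:ℂ) * x 1 := by linear_combination h2
          have hx1n : (1 + r ^ 2) * ‖x 1‖ ^ 2 = 1 := by
            have hns := norm_sq_eucl x
            rw [hx, hx0] at hns
            rw [norm_mul, norm_neg, Complex.norm_real, Real.norm_eq_abs,
              abs_of_nonneg hr] at hns
            linear_combination -hns
          have hval : act U x - act A x =
              v2 ((((-(r*α) - β - s*b0 : ℝ)) : ℂ) * x 1) ((((α - r*β - b0 : ℝ)) : ℂ) * x 1) := by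
            rw [act_eq_v2, act_eq_v2, v2_sub]
            simp only [hU_def, hA_def, Matrix.of_apply, Matrix.cons_val', Matrix.cons_val_zero,
              Matrix.cons_val_one, Matrix.head_cons, Matrix.empty_val', Matrix.cons_val_fin_one,
              Matrix.head_fin_const]
            exact congrArg₂ v2 (by rw [hx0]; push_cast; ring) (by rw [hx0]; push_cast; ring)
          rw [hval]
          apply norm_le_of_sq_le hρ0 (norm_nonneg _)
          rw [norm_sq_eucl]
          simp only [v2_0, v2_1, norm_mul, Complex.norm_real, Real.norm_eq_abs]
          have hW : ((-(r*α) - β - s*b0) ^ 2 + (α - r*β - b0) ^ 2) * (1 + s ^ 2) + m ^ 2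
              = (1 + r ^ 2) * (1 + s ^ 2) * (α ^ 2 + β ^ 2) := by
            rw [hb0_def, hm_def]; field_simp; ring
          have hKm : K * ((1 + r ^ 2) * (1 + s ^ 2)) = m ^ 2 := by
            rw [hK_def]; field_simp
          have hx1sq : ‖x 1‖ ^ 2 = 1 / (1 + r ^ 2) := by
            rw [eq_div_iff (by positivity)]; linarith only [hx1n]
          have expand : (|(-(r*α) - β - s*b0)| * ‖x 1‖) ^ 2 + (|(α - r*β - b0)| * ‖x 1‖) ^ 2
              = ((-(r*α) - β - s*b0) ^ 2 + (α - r*β - b0) ^ 2) * ‖x 1‖ ^ 2 := by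
            rw [mul_pow, mul_pow, sq_abs, sq_abs]; ring
          rw [hpy] at hW
          have hpos1 : (0:ℝ) < 1 + r ^ 2 := by positivity
          have hpos2 : (0:ℝ) < 1 + s ^ 2 := by positivity
          have hX : (-(r*α) - β - s*b0) ^ 2 + (α - r*β - b0) ^ 2 = (1 - K) * (1 + r ^ 2) := by
            apply mul_right_cancel₀ (ne_of_gt hpos2)
            linear_combination hW + hKm
          rw [expand, hx1sq, hX]
          have hcanc : (1 - K) * (1 + r ^ 2) * (1 / (1 + r ^ 2)) = 1 - K := by
            field_simp
          rw [hcanc]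
          exact hρK
        · -- generic case : exact solvability
          obtain ⟨b, hb_def⟩ : ∃ b : ℂ, b = ((β:ℂ) * x 0 + (α:ℂ) * x 1) / x 1 := ⟨_, rfl⟩
          obtain ⟨a, ha_def⟩ : ∃ a : ℂ,
              a = ((α:ℂ) * x 0 - (β:ℂ) * x 1 - (s:ℂ) * b * x 1) / (x 0 + (r:ℂ) * x 1) := ⟨_, rfl⟩
          set A : Matrix (Fin 2) (Fin 2) ℂ := !![a, (r:ℂ)*a + (s:ℂ)*b; 0, b] with hA_def
          have hAmem : A ∈ Srs r s := by
            rw [mem_Srs, hA_def]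
            refine ⟨by simp, ?_⟩
            simp only [Matrix.of_apply, Matrix.cons_val', Matrix.cons_val_zero,
              Matrix.cons_val_one, Matrix.head_cons, Matrix.empty_val', Matrix.cons_val_fin_one,
              Matrix.head_fin_const]
          have hexact : act A x = act U x := by
            rw [act_eq_v2, act_eq_v2]
            simp only [hU_def, hA_def, Matrix.of_apply, Matrix.cons_val', Matrix.cons_val_zero,
              Matrix.cons_val_one, Matrix.head_cons, Matrix.empty_val', Matrix.cons_val_fin_one,
              Matrix.head_fin_const]
            refine congrArg₂ v2 ?_ ?_
            · rw [ha_def, hb_def]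
              have h2' : x 0 + x 1 * (r:ℂ) ≠ 0 := by rwa [mul_comm] at h2
              field_simp
              ring
            · rw [hb_def]
              field_simp
              ring
          calc Metric.infDist (act U x) ((fun A => act A x) '' (Srs r s : Set _))
              ≤ dist (act U x) (act A x) := Metric.infDist_le_dist_of_mem
                (Set.mem_image_of_mem _ (by exact_mod_cast hAmem))
            _ = 0 := by rw [hexact, dist_self]
            _ ≤ ρ := hρ0
    linarith only [hsup, hρ1]
  -- assembling the result
  refine ⟨?_, θ, hα, hαlt, hdist, hbeta⟩
  intro hH
  have := hH U
  rw [hdist] at this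
  linarith only [hbeta, this]
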